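/- In the counterexample instance with the Simple distribution, for every max-weight selection m for the query set {e3}, V^MAX({e3}; m) = 27/32. In particular, combined with V^MAX(∅) = 7/8, querying the single edge e3 strictly decreases the expected final matching weight under the max-weight policy. -/
import Mathlib


/-- A structure in an exchange is either a cycle or a chain. -/
inductive StructKind : Type
  | cycle : StructKind
  | chain : StructKind
  deriving DecidableEq

/-- A structure: a list of edges together with a cycle/chain tag. -/
abbrev ExchangeStruct (E : Type) := List E × StructKind

/-- A finite independent exchange model: a finite edge set `E`, nonnegative edge
weights `w`, a finite set `structs` of structures (lists of distinct edges tagged as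
cycles or chains), a nonempty finite collection `matchings` of feasible matchings
(subsets of `structs`), and per-edge probabilities `ρ e` (rejection if queried),
`φQ e` (post-match failure if queried and accepted), `φN e` (post-match failure if
not queried), all in `[0,1]`; all edges are independent. -/
structure ExchangeModel (E : Type) [Fintype E] [DecidableEq E] where
  w : E → ℝ
  w_nonneg : ∀ e, 0 ≤ w e
  structs : Finset (ExchangeStruct E)
  structs_nodup : ∀ c ∈ structs, c.1.Nodup
  matchings : Finset (Finset (ExchangeStruct E))
  matchings_nonempty : matchings.Nonempty
  matchings_sub : ∀ x ∈ matchings, x ⊆ structs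
  ρ : E → ℝ
  φQ : E → ℝ
  φN : E → ℝ
  ρ_mem : ∀ e, ρ e ∈ Set.Icc (0 : ℝ) 1
  φQ_mem : ∀ e, φQ e ∈ Set.Icc (0 : ℝ) 1
  φN_mem : ∀ e, φN e ∈ Set.Icc (0 : ℝ) 1

variable {E : Type} [Fintype E] [DecidableEq E]

/-- Expected final weight of a chain with edge list `es`:
`Σ_{k} w (e_k) · Π_{j ≤ k} s (e_j)`. -/
def chainVal (w s : E → ℝ) : List E → ℝ
  | [] => 0
  | e :: es => s e * (w e + chainVal w s es)

/-- Expected final weight `G c s` of a structure `c` under per-edge success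
probabilities `s`. -/
def structVal (w s : E → ℝ) (c : ExchangeStruct E) : ℝ :=
  match c.2 with
  | .cycle => (c.1.map w).sum * (c.1.map s).prod
  | .chain => chainVal w s c.1

/-- Per-edge success probabilities `s_{q,r}` for query set `q` and rejection set `r`. -/
def succProb (M : ExchangeModel E) (q r : Finset E) : E → ℝ :=
  fun e => if e ∈ r then 0 else if e ∈ q then 1 - M.φQ e else 1 - M.φN e

/-- Probability `P_q r` of rejection set `r ⊆ q`. -/
def rejProb (M : ExchangeModel E) (q r : Finset E) : ℝ :=
  (∏ e ∈ r, M.ρ e) * ∏ e ∈ q \ r, (1 - M.ρ e)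

/-- Expected final weight of a matching `x` under success probabilities `s`. -/
def matchVal (M : ExchangeModel E) (s : E → ℝ) (x : Finset (ExchangeStruct E)) : ℝ :=
  ∑ c ∈ x, structVal M.w s c

/-- The failure-aware optimal expected matching weight `max_{x ∈ M} Σ_{c ∈ x} G(c, s)`. -/
def bestVal (M : ExchangeModel E) (s : E → ℝ) : ℝ :=
  M.matchings.sup' M.matchings_nonempty (matchVal M s)

/-- The failure-aware value `V^FA q` of a query set `q`. -/
def VFA (M : ExchangeModel E) (q : Finset E) : ℝ :=
  ∑ r ∈ q.powerset, rejProb M q r * bestVal M (succProb M q r)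

/-- Nominal weight of (the edge list of) a chain under rejection set `r`: the summed
weight of all edges preceding the first rejected edge. -/
def chainNominal (w : E → ℝ) (r : Finset E) : List E → ℝ
  | [] => 0
  | e :: es => if e ∈ r then 0 else w e + chainNominal w r es

/-- Nominal weight `F c r` of a structure `c` under rejection set `r`. -/
def nominalVal (w : E → ℝ) (r : Finset E) (c : ExchangeStruct E) : ℝ :=
  match c.2 with
  | .cycle => if ∀ e ∈ c.1, e ∉ r then (c.1.map w).sum else 0
  | .chain => chainNominal w r c.1

/-- `m` is a max-weight selection for query set `q`: to each rejection set `r ⊆ q` it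
assigns a feasible matching maximizing the nominal weight `Σ_{c ∈ x} F(c, r)`. -/
def IsMaxWeightSelection (M : ExchangeModel E) (q : Finset E)
    (m : Finset E → Finset (ExchangeStruct E)) : Prop :=
  ∀ r ∈ q.powerset, m r ∈ M.matchings ∧
    ∀ x ∈ M.matchings, ∑ c ∈ x, nominalVal M.w r c ≤ ∑ c ∈ m r, nominalVal M.w r c

/-- The max-weight value `V^MAX (q; m)` of query set `q` under max-weight selection `m`. -/
def VMAX (M : ExchangeModel E) (q : Finset E)
    (m : Finset E → Finset (ExchangeStruct E)) : ℝ :=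
  ∑ r ∈ q.powerset, rejProb M q r * ∑ c ∈ m r, structVal M.w (succProb M q r) c

/-! ### The counterexample instance
Edges (as elements of `Fin 8`): `0 = A→B` (`e1`), `1 = B→A`, `2 = B→C` (`e2`),
`3 = C→E`, `4 = E→B`, `5 = C→D` (`e3`), `6 = D→F`, `7 = F→C`.
Cycles: `c1 = (A→B, B→A)`, `c2 = (B→C, C→E, E→B)`, `c3 = (C→D, D→F, F→C)`.
All edge weights are `1` except `E→B`, which has weight `1.5`.
The Simple distribution: `ρ = 1/2`, `φQ = 0`, `φN = 1/2` on every edge. -/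

/-- The 2-cycle `(A→B, B→A)`. -/
def c1 : ExchangeStruct (Fin 8) := ([0, 1], StructKind.cycle)

/-- The 3-cycle `(B→C, C→E, E→B)`. -/
def c2 : ExchangeStruct (Fin 8) := ([2, 3, 4], StructKind.cycle)

/-- The 3-cycle `(C→D, D→F, F→C)`. -/
def c3 : ExchangeStruct (Fin 8) := ([5, 6, 7], StructKind.cycle)

/-- The edge `A→B`. -/
def e1 : Fin 8 := 0

/-- The edge `B→C`. -/
def e2 : Fin 8 := 2

/-- The edge `C→D`. -/
def e3 : Fin 8 := 5

/-- The counterexample exchange model with the Simple distribution. -/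
noncomputable def counterModel : ExchangeModel (Fin 8) where
  w := fun e => if e = 4 then 3 / 2 else 1
  w_nonneg := by intro e; by_cases h : e = (4 : Fin 8) <;> norm_num [h]
  structs := {c1, c2, c3}
  structs_nodup := by decide
  matchings := {∅, {c1}, {c2}, {c3}, {c1, c3}}
  matchings_nonempty := ⟨∅, by decide⟩
  matchings_sub := by decide
  ρ := fun _ => 1 / 2
  φQ := fun _ => 0
  φN := fun _ => 1 / 2
  ρ_mem := by intro e; constructor <;> norm_num
  φQ_mem := by intro e; constructor <;> norm_num
  φN_mem := by intro e; constructor <;> norm_num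

lemma maxsel_e3_empty (m : Finset (Fin 8) → Finset (ExchangeStruct (Fin 8)))
    (h : IsMaxWeightSelection counterModel {e3} m) : m ∅ = {c1, c3} := by
  obtain ⟨hmem, hle⟩ := h ∅ (by simp)
  have hb := hle {c1, c3} (by simp [counterModel])
  simp [counterModel] at hmem
  rcases hmem with h | h | h | h | h <;> rw [h] <;> rw [h] at hb <;>
    simp (config := { decide := true })
      [nominalVal, counterModel, c1, c2, c3, e3, Finset.sum_insert] at hb ⊢ <;>
    norm_num at hb

lemma maxsel_e3_e3 (m : Finset (Fin 8) → Finset (ExchangeStruct (Fin 8)))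
    (h : IsMaxWeightSelection counterModel {e3} m) : m {e3} = {c2} := by
  obtain ⟨hmem, hle⟩ := h {e3} (by simp)
  have hb := hle {c2} (by simp [counterModel])
  simp [counterModel] at hmem
  rcases hmem with h | h | h | h | h <;> rw [h] <;> rw [h] at hb <;>
    simp (config := { decide := true })
      [nominalVal, counterModel, c1, c2, c3, e3, Finset.sum_insert] at hb ⊢ <;>
    norm_num at hb

lemma maxsel_empty (m : Finset (Fin 8) → Finset (ExchangeStruct (Fin 8)))
    (h : IsMaxWeightSelection counterModel ∅ m) : m ∅ = {c1, c3} := by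
  obtain ⟨hmem, hle⟩ := h ∅ (by simp)
  have hb := hle {c1, c3} (by simp [counterModel])
  simp [counterModel] at hmem
  rcases hmem with h | h | h | h | h <;> rw [h] <;> rw [h] at hb <;>
    simp (config := { decide := true })
      [nominalVal, counterModel, c1, c2, c3, e3, Finset.sum_insert] at hb ⊢ <;>
    norm_num at hb

lemma VMAX_e3_val (m : Finset (Fin 8) → Finset (ExchangeStruct (Fin 8)))
    (h : IsMaxWeightSelection counterModel {e3} m) :
    VMAX counterModel {e3} m = 27 / 32 := by
  have h1 := maxsel_e3_empty m h
  have h2 := maxsel_e3_e3 m h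
  rw [VMAX]
  rw [show ({e3} : Finset (Fin 8)).powerset = {∅, {e3}} from by decide]
  rw [Finset.sum_insert (by decide), Finset.sum_singleton, h1, h2]
  simp (config := { decide := true })
    [rejProb, succProb, structVal, counterModel, c1, c2, c3, e3, Finset.sum_insert,
     Finset.prod_insert]
  norm_num

lemma VMAX_empty_val (m : Finset (Fin 8) → Finset (ExchangeStruct (Fin 8)))
    (h : IsMaxWeightSelection counterModel ∅ m) :
    VMAX counterModel ∅ m = 7 / 8 := by
  have h1 := maxsel_empty m h
  rw [VMAX]
  rw [show (∅ : Finset (Fin 8)).powerset = {∅} from by decide, Finset.sum_singleton, h1]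
  simp (config := { decide := true })
    [rejProb, succProb, structVal, counterModel, c1, c2, c3, e3, Finset.sum_insert,
     Finset.prod_insert]
  norm_num

/-- In the counterexample instance with the Simple distribution, every max-weight
selection for the query set `{e3}` achieves `V^MAX({e3}) = 27/32`; in particular,
querying the single edge `e3` strictly decreases the expected final matching weight
under the max-weight policy, compared with querying nothing. -/
theorem counterModel_VMAX_e3 :
    (∀ m, IsMaxWeightSelection counterModel {e3} m →
      VMAX counterModel {e3} m = 27 / 32) ∧
    (∀ m₁, IsMaxWeightSelection counterModel {e3} m₁ →
      ∀ m₀, IsMaxWeightSelection counterModel ∅ m₀ →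
        VMAX counterModel {e3} m₁ < VMAX counterModel ∅ m₀) := by
  refine ⟨fun m h => VMAX_e3_val m h, fun m₁ h₁ m₀ h₀ => ?_⟩
  rw [VMAX_e3_val m₁ h₁, VMAX_empty_val m₀ h₀]
  norm_num
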